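/- Let f be a Boolean network of dimension n and y a fixed point of f. Let O be the union of the vertex sets of the strongly connected components of the interaction graph G(f) that contain a positive cycle, and let g = f[O←y] be the modified network obtained by setting g_i(x) = y_i for all i ∈ O and g_i = f_i otherwise. Then y is reachable in the asynchronous dynamics of g from every state; in particular {y} is the unique attractor of g. -/

import Mathlib

/-- Asynchronous transition: update one vertex `u` where `f` disagrees with `x`. -/
def AsyncStep {n : ℕ} (f : (Fin n → Bool) → (Fin n → Bool)) (x z : Fin n → Bool) : Prop :=
  ∃ u : Fin n, f x u ≠ x u ∧ z = Function.update x u (f x u)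

/-- Reachability: reflexive-transitive closure of the asynchronous transition relation. -/
def Reach {n : ℕ} (f : (Fin n → Bool) → (Fin n → Bool)) :
    (Fin n → Bool) → (Fin n → Bool) → Prop :=
  Relation.ReflTransGen (AsyncStep f)

/-- An attractor: nonempty, closed under transitions, strongly connected for reachability. -/
def IsAttractor {n : ℕ} (f : (Fin n → Bool) → (Fin n → Bool)) (S : Set (Fin n → Bool)) : Prop :=
  S.Nonempty ∧ (∀ x ∈ S, ∀ z, AsyncStep f x z → z ∈ S) ∧ (∀ x ∈ S, ∀ z ∈ S, Reach f x z)

/-- Positive edge of the interaction graph `G(f)`. -/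
def PosEdge {n : ℕ} (f : (Fin n → Bool) → (Fin n → Bool)) (u v : Fin n) : Prop :=
  ∃ x : Fin n → Bool,
    f (Function.update x u true) v = true ∧ f (Function.update x u false) v = false

/-- Negative edge of the interaction graph `G(f)`. -/
def NegEdge {n : ℕ} (f : (Fin n → Bool) → (Fin n → Bool)) (u v : Fin n) : Prop :=
  ∃ x : Fin n → Bool,
    f (Function.update x u true) v = false ∧ f (Function.update x u false) v = true

/-- Signed edge (`true` = positive, `false` = negative). -/
def SignedEdge {n : ℕ} (f : (Fin n → Bool) → (Fin n → Bool)) (u v : Fin n) (s : Bool) : Prop :=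
  match s with
  | true => PosEdge f u v
  | false => NegEdge f u v

/-- A cycle of `G(f)`: a nonempty list of signed edges, consecutively chained,
the last edge returning to the source of the first. -/
def IsCycle {n : ℕ} (f : (Fin n → Bool) → (Fin n → Bool))
    (es : List (Fin n × Fin n × Bool)) : Prop :=
  es ≠ [] ∧ (∀ e ∈ es, SignedEdge f e.1 e.2.1 e.2.2) ∧
  es.Chain' (fun e e' => e.2.1 = e'.1) ∧
  es.getLast?.map (fun e => e.2.1) = es.head?.map (fun e => e.1)

/-- A positive cycle: a cycle traversing an even number of negative edges. -/
def IsPosCycle {n : ℕ} (f : (Fin n → Bool) → (Fin n → Bool))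
    (es : List (Fin n × Fin n × Bool)) : Prop :=
  IsCycle f es ∧ Even (es.countP (fun e => !e.2.2))

/-- Unsigned edge of the interaction graph. -/
def EdgeU {n : ℕ} (f : (Fin n → Bool) → (Fin n → Bool)) (u v : Fin n) : Prop :=
  PosEdge f u v ∨ NegEdge f u v

/-- `v` is an ancestor of `u`: nonempty directed path from `v` to `u` in `G(f)`. -/
def Ancestor {n : ℕ} (f : (Fin n → Bool) → (Fin n → Bool)) (v u : Fin n) : Prop :=
  Relation.TransGen (EdgeU f) v u

/-- `u` and `v` are in the same strongly connected component of (the unsigned) `G(f)`. -/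
def SameSCC {n : ℕ} (f : (Fin n → Bool) → (Fin n → Bool)) (u v : Fin n) : Prop :=
  Relation.ReflTransGen (EdgeU f) u v ∧ Relation.ReflTransGen (EdgeU f) v u

/-- `u` belongs to an SCC of `G(f)` containing a positive cycle. -/
def InPosSCC {n : ℕ} (f : (Fin n → Bool) → (Fin n → Bool)) (u : Fin n) : Prop :=
  ∃ es, IsPosCycle f es ∧ ∀ v ∈ es.map Prod.fst, SameSCC f v u

open Classical in
/-- The modified network `f[I←y]`. -/
noncomputable def modifyBN {n : ℕ} (f : (Fin n → Bool) → (Fin n → Bool)) (I : Set (Fin n))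
    (y : Fin n → Bool) : (Fin n → Bool) → (Fin n → Bool) :=
  fun x i => if i ∈ I then y i else f x i

open Classical in
/-- The state `x_{[x_I = y_I]}`: equal to `y` on `I`, to `x` elsewhere. -/
noncomputable def patchState {n : ℕ} (x : Fin n → Bool) (I : Set (Fin n)) (y : Fin n → Bool) :
    Fin n → Bool :=
  fun i => if i ∈ I then y i else x i

/-!
Fixing the vertices of `O` to their values in `y` removes every edge entering `O`. A positive
cycle of `g = f[O←y]` would then be a positive cycle of `f`, whose vertices all lie in one SCC
and hence in `O`; since each of them is also the target of an edge of the cycle, this is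
impossible. So `g` has no positive cycle, and `y` is still a fixed point of `g`.

Now let `x ≠ y` and let `D` be the set of coordinates where they differ. If no coordinate of `D`
could be updated towards `y`, then `g_v(x) ≠ g_v(y)` for every `v ∈ D`; walking from `x` to `y`
one coordinate of `D` at a time, `g_v` switches at some `u ∈ D`, which gives an edge `u → v` of
sign `y_u == y_v`. Following such edges backwards inside the finite set `D` closes a cycle along
which the signs telescope, i.e. a positive cycle. Hence some coordinate can always be moved
towards `y`, and the Hamming distance to `y` decreases to `0`.
-/

open Function Relation

section EdgeLists

variable {α β : Type*} {r : α → α → Prop}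

theorem reflTransGen_head_of_isChain_edges :
    ∀ {e₀ : α × α × β} {l : List (α × α × β)},
      (e₀ :: l).IsChain (fun e e' => e.2.1 = e'.1) → (∀ e ∈ e₀ :: l, r e.1 e.2.1) →
      ∀ e ∈ e₀ :: l, ReflTransGen r e₀.1 e.1
  | _, [], _, _, _, he => by rw [List.mem_singleton.mp he]
  | e₀, e₁ :: l, hch, hr, e, he => by
    obtain ⟨hlink, hch⟩ := List.isChain_cons_cons.mp hch
    rcases List.mem_cons.mp he with rfl | he
    · rfl
    · exact .head (hlink ▸ hr e₀ List.mem_cons_self)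
        (reflTransGen_head_of_isChain_edges hch (fun e he => hr e (List.mem_cons_of_mem _ he)) e he)

theorem reflTransGen_getLast_of_isChain_edges :
    ∀ {e₀ : α × α × β} {l : List (α × α × β)},
      (e₀ :: l).IsChain (fun e e' => e.2.1 = e'.1) → (∀ e ∈ e₀ :: l, r e.1 e.2.1) →
      ∀ e ∈ e₀ :: l, ReflTransGen r e.1 ((e₀ :: l).getLast (List.cons_ne_nil _ _)).2.1
  | e₀, [], _, hr, _, he => by
    rw [List.mem_singleton.mp he]; exact .single (hr e₀ List.mem_cons_self)
  | e₀, e₁ :: l, hch, hr, e, he => by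
    obtain ⟨hlink, hch⟩ := List.isChain_cons_cons.mp hch
    have ih := reflTransGen_getLast_of_isChain_edges hch
      (fun e he => hr e (List.mem_cons_of_mem _ he))
    rw [List.getLast_cons_cons]
    rcases List.mem_cons.mp he with rfl | he
    · exact .head (hlink ▸ hr e List.mem_cons_self) (ih e₁ List.mem_cons_self)
    · exact ih e he

end EdgeLists

section Cycles

variable {n : ℕ} {f : (Fin n → Bool) → (Fin n → Bool)}

theorem SignedEdge.edgeU {u v : Fin n} {s : Bool} (h : SignedEdge f u v s) : EdgeU f u v := by
  cases s
  exacts [Or.inr h, Or.inl h]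

theorem IsCycle.getLast_target {e₀ : Fin n × Fin n × Bool} {es : List (Fin n × Fin n × Bool)}
    (h : IsCycle f (e₀ :: es)) : ((e₀ :: es).getLast (List.cons_ne_nil _ _)).2.1 = e₀.1 := by
  have hwrap := h.2.2.2
  rw [List.getLast?_eq_some_getLast (List.cons_ne_nil _ _)] at hwrap
  simpa using hwrap

theorem IsCycle.sameSCC_head {e₀ : Fin n × Fin n × Bool} {es : List (Fin n × Fin n × Bool)}
    (h : IsCycle f (e₀ :: es)) : ∀ e ∈ e₀ :: es, SameSCC f e.1 e₀.1 := by
  have hedge : ∀ e ∈ e₀ :: es, EdgeU f e.1 e.2.1 := fun e he => (h.2.1 e he).edgeU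
  intro e he
  exact ⟨h.getLast_target ▸ reflTransGen_getLast_of_isChain_edges h.2.2.1 hedge e he,
    reflTransGen_head_of_isChain_edges h.2.2.1 hedge e he⟩

theorem signedEdge_modifyBN {I : Set (Fin n)} {y : Fin n → Bool} {u v : Fin n} {s : Bool}
    (h : SignedEdge (modifyBN f I y) u v s) : v ∉ I ∧ SignedEdge f u v s := by
  by_cases hv : v ∈ I
  · cases s <;> obtain ⟨x, h₁, h₂⟩ := h <;> simp only [modifyBN, hv, if_true] at h₁ h₂ <;>
      simp [h₁] at h₂
  · cases s <;> obtain ⟨x, h₁, h₂⟩ := h <;> simp only [modifyBN, hv, if_false] at h₁ h₂ <;>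
      exact ⟨hv, x, h₁, h₂⟩

theorem modifyBN_apply_self {y : Fin n → Bool} (hy : f y = y) (I : Set (Fin n)) :
    modifyBN f I y y = y :=
  funext fun i => by by_cases hi : i ∈ I <;> simp [modifyBN, hi, hy]

theorem not_isPosCycle_modifyBN_inPosSCC (y : Fin n → Bool) (es : List (Fin n × Fin n × Bool)) :
    ¬ IsPosCycle (modifyBN f {i | InPosSCC f i} y) es := by
  rintro ⟨⟨hne, hedge, hch, hwrap⟩, heven⟩
  obtain ⟨e₀, es, rfl⟩ := List.exists_cons_of_ne_nil hne
  have hcyc : IsCycle f (e₀ :: es) :=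
    ⟨hne, fun e he => (signedEdge_modifyBN (hedge e he)).2, hch, hwrap⟩
  have hin : InPosSCC f e₀.1 := ⟨_, ⟨hcyc, heven⟩, fun v hv => by
    obtain ⟨e, he, rfl⟩ := List.mem_map.mp hv
    exact hcyc.sameSCC_head e he⟩
  have hlast := (signedEdge_modifyBN (hedge _ (List.getLast_mem (List.cons_ne_nil e₀ es)))).1
  exact hlast (hcyc.getLast_target ▸ hin)

end Cycles

section CoherentWalks

variable {α : Type*} (w : ℕ → α) (y : α → Bool)

def coherentPath : ℕ → List (α × α × Bool)
  | 0 => []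
  | k + 1 => (w (k + 1), w k, y (w (k + 1)) == y (w k)) :: coherentPath k

theorem mem_coherentPath {k : ℕ} {e : α × α × Bool} (he : e ∈ coherentPath w y k) :
    ∃ j, e = (w (j + 1), w j, y (w (j + 1)) == y (w j)) := by
  induction k with
  | zero => simp [coherentPath] at he
  | succ k ih =>
    rcases List.mem_cons.mp he with rfl | he
    exacts [⟨k, rfl⟩, ih he]

theorem isChain_coherentPath :
    ∀ k, (coherentPath w y k).IsChain (fun e e' => e.2.1 = e'.1)
  | 0 | 1 => by simp [coherentPath]
  | k + 2 => List.isChain_cons_cons.mpr ⟨rfl, isChain_coherentPath (k + 1)⟩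

theorem getLast?_coherentPath :
    ∀ k, (coherentPath w y (k + 1)).getLast?.map (fun e => e.2.1) = some (w 0)
  | 0 => rfl
  | k + 1 => by
    rw [coherentPath, coherentPath, List.getLast?_cons_cons]
    exact getLast?_coherentPath k

theorem even_countP_coherentPath_iff (k : ℕ) :
    Even ((coherentPath w y k).countP (fun e => !e.2.2)) ↔ y (w k) = y (w 0) := by
  induction k with
  | zero => simp [coherentPath]
  | succ k ih =>
    rw [coherentPath, List.countP_cons]
    cases h₁ : y (w (k + 1)) <;> cases h₂ : y (w k) <;> cases h₃ : y (w 0) <;>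
      simp_all [Nat.even_add_one]

end CoherentWalks

section PositiveCycles

variable {n : ℕ} {g : (Fin n → Bool) → (Fin n → Bool)}

theorem isPosCycle_coherentPath {w : ℕ → Fin n} {y : Fin n → Bool}
    (hw : ∀ k, SignedEdge g (w (k + 1)) (w k) (y (w (k + 1)) == y (w k)))
    {m : ℕ} (hm : w (m + 1) = w 0) : IsPosCycle g (coherentPath w y (m + 1)) := by
  refine ⟨⟨List.cons_ne_nil _ _, fun e he => ?_, isChain_coherentPath w y _, ?_⟩, ?_⟩
  · obtain ⟨j, rfl⟩ := mem_coherentPath w y he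
    exact hw j
  · rw [getLast?_coherentPath, ← hm]
    rfl
  · exact (even_countP_coherentPath_iff w y _).mpr (by rw [hm])

theorem exists_isPosCycle_of_coherent_walk {w : ℕ → Fin n} {y : Fin n → Bool}
    (hw : ∀ k, SignedEdge g (w (k + 1)) (w k) (y (w (k + 1)) == y (w k))) :
    ∃ es, IsPosCycle g es := by
  obtain ⟨i, j, hij, hw_eq⟩ := Finite.exists_ne_map_eq_of_infinite w
  wlog hlt : i < j generalizing i j
  · exact this j i hij.symm hw_eq.symm (by omega)
  obtain ⟨m, rfl⟩ := Nat.exists_eq_add_of_lt hlt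
  exact ⟨_, isPosCycle_coherentPath (w := fun k => w (i + k)) (fun k => hw (i + k))
    (m := m) hw_eq.symm⟩

theorem exists_isPosCycle_of_coherent_inEdges (y : Fin n → Bool) {D : Set (Fin n)} {v₀ : Fin n}
    (hv₀ : v₀ ∈ D) (h : ∀ v ∈ D, ∃ u ∈ D, SignedEdge g u v (y u == y v)) :
    ∃ es, IsPosCycle g es := by
  choose! pred hpred_mem hpred using h
  have hmem : ∀ k, pred^[k] v₀ ∈ D := fun k => by
    induction k with
    | zero => exact hv₀
    | succ k ih => rw [iterate_succ_apply']; exact hpred_mem _ ih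
  refine exists_isPosCycle_of_coherent_walk (w := fun k => pred^[k] v₀) (y := y) fun k => ?_
  simp only [iterate_succ_apply']
  exact hpred _ (hmem k)

end PositiveCycles

theorem hammingDist_update_lt {ι : Type*} [Fintype ι] [DecidableEq ι] {γ : ι → Type*}
    [∀ i, DecidableEq (γ i)] {x y : ∀ i, γ i} {u : ι} (h : x u ≠ y u) :
    hammingDist (update x u (y u)) y < hammingDist x y := by
  refine Finset.card_lt_card ((Finset.ssubset_iff_of_subset fun i hi => ?_).mpr
    ⟨u, by simpa using h, by simp⟩)
  by_cases hiu : i = u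
  · subst hiu; simp at hi
  · simpa [update_of_ne hiu] using hi

section Dynamics

variable {n : ℕ} {g : (Fin n → Bool) → (Fin n → Bool)}

theorem signedEdge_of_update {z : Fin n → Bool} {u v : Fin n} {b c : Bool}
    (h₁ : g (update z u b) v = c) (h₂ : g (update z u (!b)) v = !c) :
    SignedEdge g u v (b == c) := by
  cases b <;> cases c <;> simp only [Bool.not_false, Bool.not_true] at h₂
  exacts [⟨z, h₂, h₁⟩, ⟨z, h₂, h₁⟩, ⟨z, h₁, h₂⟩, ⟨z, h₁, h₂⟩]

theorem exists_signedEdge_of_apply_ne (v : Fin n) {x y : Fin n → Bool} (h : g x v ≠ g y v) :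
    ∃ i, x i ≠ y i ∧ SignedEdge g i v (y i == g y v) := by
  induction hd : hammingDist x y using Nat.strong_induction_on generalizing x with
  | _ d ih =>
  obtain ⟨i, hi⟩ := Function.ne_iff.mp fun hxy : x = y => h (hxy ▸ rfl)
  by_cases h' : g (update x i (y i)) v = g y v
  · refine ⟨i, hi, signedEdge_of_update (z := update x i (y i)) ?_ ?_⟩
    · rwa [update_idem]
    · rw [update_idem, ← Bool.eq_not_of_ne hi, update_eq_self]
      exact Bool.eq_not_of_ne h
  · obtain ⟨j, hj, hedge⟩ := ih _ (hd ▸ hammingDist_update_lt hi) h' rfl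
    have hji : j ≠ i := by rintro rfl; simp at hj
    exact ⟨j, by rwa [update_of_ne hji] at hj, hedge⟩

theorem exists_update_toward_fixedPoint {y : Fin n → Bool} (hy : g y = y)
    (hpos : ∀ es, ¬ IsPosCycle g es) {x : Fin n → Bool} (hxy : x ≠ y) :
    ∃ u, x u ≠ y u ∧ g x u = y u := by
  by_contra! hstuck
  obtain ⟨v₀, hv₀⟩ := Function.ne_iff.mp hxy
  obtain ⟨es, hes⟩ := exists_isPosCycle_of_coherent_inEdges y (D := {u | x u ≠ y u}) hv₀
    fun v hv => by
      obtain ⟨u, hu, hedge⟩ := exists_signedEdge_of_apply_ne (g := g) (x := x) (y := y) v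
        (by rw [hy]; exact hstuck v hv)
      exact ⟨u, hu, by rwa [hy] at hedge⟩
  exact hpos es hes

theorem reach_of_forall_exists_update {y : Fin n → Bool}
    (hstep : ∀ x, x ≠ y → ∃ u, x u ≠ y u ∧ g x u = y u) (x : Fin n → Bool) : Reach g x y := by
  induction hd : hammingDist x y using Nat.strong_induction_on generalizing x with
  | _ d ih =>
  by_cases hxy : x = y
  · exact hxy ▸ .refl
  obtain ⟨u, hu, hgu⟩ := hstep x hxy
  exact .head ⟨u, hgu ▸ Ne.symm hu, by rw [hgu]⟩ (ih _ (hd ▸ hammingDist_update_lt hu) _ rfl)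

theorem reach_fixedPoint_of_forall_not_isPosCycle {y : Fin n → Bool} (hy : g y = y)
    (hpos : ∀ es, ¬ IsPosCycle g es) (x : Fin n → Bool) : Reach g x y :=
  reach_of_forall_exists_update (fun _ hx => exists_update_toward_fixedPoint hy hpos hx) x

theorem not_asyncStep_of_fixedPoint {y z : Fin n → Bool} (hy : g y = y) : ¬ AsyncStep g y z :=
  fun ⟨u, hu, _⟩ => hu (congrFun hy u)

theorem isAttractor_singleton_of_fixedPoint {y : Fin n → Bool} (hy : g y = y) :
    IsAttractor g {y} :=
  ⟨Set.singleton_nonempty y, fun _ hx _ hz => absurd (hx ▸ hz) (not_asyncStep_of_fixedPoint hy),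
    fun _ hx _ hz => hx ▸ hz ▸ .refl⟩

theorem IsAttractor.mem_of_reach {S : Set (Fin n → Bool)} (hS : IsAttractor g S)
    {x z : Fin n → Bool} (hxz : Reach g x z) (hx : x ∈ S) : z ∈ S := by
  induction hxz with
  | refl => exact hx
  | tail _ hstep ih => exact hS.2.1 _ ih _ hstep

theorem IsAttractor.eq_singleton_of_reach {S : Set (Fin n → Bool)} (hS : IsAttractor g S)
    {y : Fin n → Bool} (hy : g y = y) (hreach : ∀ x, Reach g x y) : S = {y} := by
  obtain ⟨x, hx⟩ := hS.1
  have hyS : y ∈ S := hS.mem_of_reach (hreach x) hx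
  refine Set.eq_singleton_iff_unique_mem.mpr ⟨hyS, fun z hz => ?_⟩
  rcases (hS.2.2 y hyS z hz).cases_head with h | ⟨c, hstep, -⟩
  · exact h.symm
  · exact absurd hstep (not_asyncStep_of_fixedPoint hy)

end Dynamics

/-- fixing all vertices of SCCs containing a positive cycle to their
values in the fixed point `y` makes `y` reachable from every state; in particular
`{y}` is the unique attractor of the modified network. -/
theorem stmt5 {n : ℕ} (f : (Fin n → Bool) → (Fin n → Bool)) (y : Fin n → Bool)
    (hy : f y = y) :
    (∀ x : Fin n → Bool, Reach (modifyBN f {i | InPosSCC f i} y) x y) ∧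
    IsAttractor (modifyBN f {i | InPosSCC f i} y) {y} ∧
    (∀ S, IsAttractor (modifyBN f {i | InPosSCC f i} y) S → S = {y}) := by
  have hgy : modifyBN f {i | InPosSCC f i} y y = y := modifyBN_apply_self hy _
  have hreach :=
    reach_fixedPoint_of_forall_not_isPosCycle hgy (not_isPosCycle_modifyBN_inPosSCC y)
  exact ⟨hreach, isAttractor_singleton_of_fixedPoint hgy,
    fun S hS => hS.eq_singleton_of_reach hgy hreach⟩
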